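/- arXiv:1612.02643 — 7 statements merged into one kernel-verified Lean document; each statement's English description precedes it below -/
import Mathlib

section
/- Let G be a graph with at least one edge and let x ∈ R^n with ‖x‖_1 = 1 maximize F_G(x) = ∑_{ij∈E}(x_i - x_j)^2 over the unit ℓ¹-sphere. Then at most one entry of x is positive or at most one entry of x is negative (i.e., min(|{i : x_i > 0}|, |{i : x_i < 0}|) ≤ 1). -/
/-!
If a maximizer `x` had two positive entries `x u, x v`, moving mass `t` between them keeps
`‖x ± t (e_u - e_v)‖₁ = 1` for small `t`, and the parallelogram law for the quadratic form gives
`F(x + t z) + F(x - t z) = 2 F(x) + 2 t² F(z)`; maximality forces `F(e_u - e_v) = 0`, i.e. `u` is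
isolated. Applying this to `x` and `-x`, if both signs occur twice then every vertex in the support
of `x` is isolated, so `F(x) = 0`, whereas `(e_a - e_b) / 2` has `ℓ¹`-norm one and `F > 0` for any
edge `ab`.
-/

open scoped Classical
open Finset

/-- The `p`-norm of a vector. -/
noncomputable def pNorm {V : Type*} [Fintype V] (p : ℝ) (x : V → ℝ) : ℝ :=
  (∑ i, |x i| ^ p) ^ (1 / p)

/-- The sup-norm of a vector. -/
noncomputable def supNorm {V : Type*} [Fintype V] (x : V → ℝ) : ℝ :=
  ⨆ i, |x i|

/-- The Laplacian quadratic form `∑_{ij ∈ E} (x_i - x_j)^2` of a graph. -/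
noncomputable def quadForm {V : Type*} [Fintype V] (G : SimpleGraph V) (x : V → ℝ) : ℝ :=
  (∑ i, ∑ j, if G.Adj i j then (x i - x j) ^ 2 else 0) / 2

/-- The `p`-spectral radius of the Laplacian: `μ⁽ᵖ⁾(G) = max_{‖x‖ₚ = 1} xᵀLx`. -/
noncomputable def mu {V : Type*} [Fintype V] (G : SimpleGraph V) (p : ℝ) : ℝ :=
  sSup {y | ∃ x : V → ℝ, pNorm p x = 1 ∧ quadForm G x = y}

/-- `μ⁽^∞⁾(G) = max_{‖x‖_∞ = 1} xᵀLx`. -/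
noncomputable def muInf {V : Type*} [Fintype V] (G : SimpleGraph V) : ℝ :=
  sSup {y | ∃ x : V → ℝ, supNorm x = 1 ∧ quadForm G x = y}

section

variable {V : Type*} [Fintype V]

lemma pNorm_one_eq (x : V → ℝ) : pNorm 1 x = ∑ i, |x i| := by
  simp [pNorm]

lemma pNorm_neg (p : ℝ) (x : V → ℝ) : pNorm p (-x) = pNorm p x := by
  simp [pNorm]

variable (G : SimpleGraph V)

lemma quadForm_eq_toLinearMap₂' (x : V → ℝ) :
    quadForm G x = Matrix.toLinearMap₂' ℝ (G.lapMatrix ℝ) x x :=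
  (G.lapMatrix_toLinearMap₂' ℝ x).symm

lemma quadForm_nonneg (x : V → ℝ) : 0 ≤ quadForm G x := by
  unfold quadForm
  positivity

lemma quadForm_eq_zero_iff (x : V → ℝ) :
    quadForm G x = 0 ↔ ∀ i j, G.Adj i j → x i = x j := by
  rw [quadForm_eq_toLinearMap₂', G.lapMatrix_toLinearMap₂'_apply'_eq_zero_iff_forall_adj ℝ]

lemma quadForm_neg (x : V → ℝ) : quadForm G (-x) = quadForm G x := by
  simp only [quadForm_eq_toLinearMap₂', map_neg, LinearMap.neg_apply, neg_neg]

lemma quadForm_smul (t : ℝ) (x : V → ℝ) : quadForm G (t • x) = t ^ 2 * quadForm G x := by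
  simp only [quadForm_eq_toLinearMap₂', map_smul, LinearMap.smul_apply, smul_eq_mul]
  ring

lemma quadForm_add_add_quadForm_sub (x z : V → ℝ) :
    quadForm G (x + z) + quadForm G (x - z) = 2 * (quadForm G x + quadForm G z) := by
  simp only [quadForm_eq_toLinearMap₂', map_add, map_sub, LinearMap.add_apply, LinearMap.sub_apply]
  ring

lemma quadForm_eq_zero_of_le_of_le {x z : V → ℝ} {t : ℝ} (ht : t ≠ 0)
    (hadd : quadForm G (x + t • z) ≤ quadForm G x) (hsub : quadForm G (x - t • z) ≤ quadForm G x) :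
    quadForm G z = 0 := by
  have hpar := quadForm_add_add_quadForm_sub G x (t • z)
  rw [quadForm_smul] at hpar
  have : t ^ 2 * quadForm G z ≤ 0 := by linarith
  exact le_antisymm (nonpos_of_mul_nonpos_right this (by positivity)) (quadForm_nonneg G z)

variable [DecidableEq V]

lemma pNorm_one_add_smul_single_sub_single {u v : V} (huv : u ≠ v) {x : V → ℝ} {t : ℝ}
    (hu : |t| ≤ x u) (hv : |t| ≤ x v) :
    pNorm 1 (x + t • (Pi.single u 1 - Pi.single v 1) : V → ℝ) = pNorm 1 x := by
  have habs : ∀ i, |(x + t • (Pi.single u 1 - Pi.single v 1) : V → ℝ) i|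
      = |x i| + (Pi.single u t - Pi.single v t : V → ℝ) i := by
    intro i
    have := neg_abs_le t
    have := le_abs_self t
    rcases eq_or_ne i u with rfl | hiu
    · simp [huv, abs_of_nonneg (by linarith : 0 ≤ x i), abs_of_nonneg (by linarith : 0 ≤ x i + t)]
    rcases eq_or_ne i v with rfl | hiv
    · simp [hiu, abs_of_nonneg (by linarith : 0 ≤ x i)]
      linarith
    · simp [hiu, hiv]
  simp only [pNorm_one_eq, habs, sum_add_distrib, Pi.sub_apply, sum_sub_distrib,
    sum_pi_single', mem_univ, if_true, sub_self, add_zero]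

lemma pNorm_one_single_sub_single {a b : V} (hab : a ≠ b) :
    pNorm 1 (Pi.single a (1 / 2) - Pi.single b (1 / 2) : V → ℝ) = 1 := by
  have habs : ∀ i, |(Pi.single a (1 / 2) - Pi.single b (1 / 2) : V → ℝ) i|
      = (Pi.single a (1 / 2) : V → ℝ) i + (Pi.single b (1 / 2) : V → ℝ) i := by
    intro i
    rcases eq_or_ne i a with rfl | hia
    · simp [hab]
    · rcases eq_or_ne i b with rfl | hib <;> simp [*]
  simp only [pNorm_one_eq, habs, sum_add_distrib, sum_pi_single', mem_univ, if_true]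
  norm_num

lemma not_adj_of_pos_of_pos {x : V → ℝ}
    (hmax : ∀ y, pNorm 1 y = pNorm 1 x → quadForm G y ≤ quadForm G x)
    {u v : V} (huv : u ≠ v) (hu : 0 < x u) (hv : 0 < x v) (w : V) : ¬ G.Adj u w := by
  set t := min (x u) (x v)
  have ht : 0 < t := lt_min hu hv
  have hle : ∀ s, |s| = t → quadForm G (x + s • (Pi.single u 1 - Pi.single v 1)) ≤ quadForm G x :=
    fun s hs => hmax _ <| pNorm_one_add_smul_single_sub_single huv
      (hs ▸ min_le_left _ _) (hs ▸ min_le_right _ _)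
  have hz := quadForm_eq_zero_of_le_of_le G ht.ne' (hle t (abs_of_pos ht))
    (by rw [sub_eq_add_neg, ← neg_smul]; exact hle (-t) (by rw [abs_neg, abs_of_pos ht]))
  intro huw
  have := (quadForm_eq_zero_iff G _).1 hz u w huw
  rcases eq_or_ne w v with rfl | hwv
  · norm_num [huv] at this
  · simp [huv, huw.ne', hwv] at this

end

theorem l1_maximizer_sign_pattern {n : ℕ} (G : SimpleGraph (Fin n))
    (hE : ∃ a b, G.Adj a b) (x : Fin n → ℝ) (hx : pNorm 1 x = 1)
    (hmax : ∀ y : Fin n → ℝ, pNorm 1 y = 1 → quadForm G y ≤ quadForm G x) :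
    min ((univ.filter fun i => 0 < x i).card) ((univ.filter fun i => x i < 0).card) ≤ 1 := by
  by_contra! hcard
  obtain ⟨hpos, hneg⟩ := lt_min_iff.1 hcard
  have hmax_pos : ∀ y, pNorm 1 y = pNorm 1 x → quadForm G y ≤ quadForm G x :=
    fun y hy => hmax y (hy.trans hx)
  have hmax_neg : ∀ y, pNorm 1 y = pNorm 1 (-x) → quadForm G y ≤ quadForm G (-x) := by
    simpa only [pNorm_neg, quadForm_neg] using hmax_pos
  have hsupp : ∀ i j, G.Adj i j → x i = 0 := by
    intro i j hij
    by_contra hi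
    rcases lt_or_gt_of_ne hi with hi | hi
    · obtain ⟨w, hw, hwi⟩ := exists_mem_ne hneg i
      exact not_adj_of_pos_of_pos G hmax_neg hwi.symm (neg_pos.2 hi)
        (neg_pos.2 (mem_filter.1 hw).2) j hij
    · obtain ⟨w, hw, hwi⟩ := exists_mem_ne hpos i
      exact not_adj_of_pos_of_pos G hmax_pos hwi.symm hi (mem_filter.1 hw).2 j hij
  have hx0 : quadForm G x = 0 := (quadForm_eq_zero_iff G x).2 fun i j hij =>
    (hsupp i j hij).trans (hsupp j i hij.symm).symm
  obtain ⟨a, b, hab⟩ := hE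
  have hy0 : quadForm G (Pi.single a (1 / 2) - Pi.single b (1 / 2)) ≠ 0 := fun h => by
    have := (quadForm_eq_zero_iff G _).1 h a b hab
    norm_num [hab.ne] at this
  have := hmax _ (pNorm_one_single_sub_single hab.ne)
  have := (quadForm_nonneg G _).lt_of_ne' hy0
  linarith
end

section
/- Let G be a graph and x ∈ R^n with ‖x‖_1 = 1 whose support consists of exactly two vertices a and b with x_a > 0 > x_b, where the degrees satisfy d_a ≥ d_b. Then F_G(x) ≤ d_a = F_G(e_a), with equality if and only if d_a = d_b = d_{ab}, where d_{ab} ∈ {0,1} indicates whether ab is an edge. -/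
open scoped Classical
open Finset

lemma quadForm_two_support {n : ℕ} (G : SimpleGraph (Fin n)) (y : Fin n → ℝ) (a b : Fin n)
    (hab : a ≠ b) (hsupp : ∀ i, i ≠ a → i ≠ b → y i = 0) :
    quadForm G y = ((G.degree a : ℝ) - (if G.Adj a b then 1 else 0)) * (y a)^2
      + ((G.degree b : ℝ) - (if G.Adj a b then 1 else 0)) * (y b)^2
      + (if G.Adj a b then 1 else 0) * (y a - y b)^2 := by
  classical
  set S : Finset (Fin n) := univ \ {a, b} with hS
  have hmemS : ∀ i, i ∈ S ↔ i ≠ a ∧ i ≠ b := by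
    intro i; simp [hS, and_comm]
  have hsplit : ∀ g : Fin n → ℝ, ∑ i, g i = g a + g b + ∑ i ∈ S, g i := by
    intro g
    rw [← Finset.sum_sdiff (Finset.subset_univ ({a, b} : Finset (Fin n))),
      Finset.sum_pair hab]
    ring
  have hcardA : (((S.filter (G.Adj a)).card : ℝ)) = (G.degree a : ℝ) - (if G.Adj a b then 1 else 0) := by
    have hset : S.filter (G.Adj a) = (G.neighborFinset a).erase b := by
      ext j
      simp only [Finset.mem_filter, Finset.mem_erase, SimpleGraph.mem_neighborFinset, hmemS j]
      constructor
      · rintro ⟨⟨_, hjb⟩, hadj⟩; exact ⟨hjb, hadj⟩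
      · rintro ⟨hjb, hadj⟩; exact ⟨⟨(G.ne_of_adj hadj).symm, hjb⟩, hadj⟩
    rw [hset]
    by_cases h : G.Adj a b
    · have hb : b ∈ G.neighborFinset a := by simpa [SimpleGraph.mem_neighborFinset] using h
      rw [Finset.card_erase_of_mem hb, if_pos h]
      have : 1 ≤ (G.neighborFinset a).card := Finset.card_pos.2 ⟨b, hb⟩
      rw [SimpleGraph.degree]
      push_cast [Nat.cast_sub this]
      ring
    · have hb : b ∉ G.neighborFinset a := by simpa [SimpleGraph.mem_neighborFinset] using h
      rw [Finset.erase_eq_of_notMem hb, if_neg h, SimpleGraph.degree]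
      ring
  have hcardB : (((S.filter (G.Adj b)).card : ℝ)) = (G.degree b : ℝ) - (if G.Adj a b then 1 else 0) := by
    have hset : S.filter (G.Adj b) = (G.neighborFinset b).erase a := by
      ext j
      simp only [Finset.mem_filter, Finset.mem_erase, SimpleGraph.mem_neighborFinset, hmemS j]
      constructor
      · rintro ⟨⟨hja, _⟩, hadj⟩; exact ⟨hja, hadj⟩
      · rintro ⟨hja, hadj⟩; exact ⟨⟨hja, (G.ne_of_adj hadj).symm⟩, hadj⟩
    rw [hset]
    by_cases h : G.Adj a b
    · have hb : a ∈ G.neighborFinset b := by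
        simpa [SimpleGraph.mem_neighborFinset] using h.symm
      rw [Finset.card_erase_of_mem hb, if_pos h]
      have : 1 ≤ (G.neighborFinset b).card := Finset.card_pos.2 ⟨a, hb⟩
      rw [SimpleGraph.degree]
      push_cast [Nat.cast_sub this]
      ring
    · have hb : a ∉ G.neighborFinset b := by
        simp only [SimpleGraph.mem_neighborFinset]
        exact fun hh => h hh.symm
      rw [Finset.erase_eq_of_notMem hb, if_neg h, SimpleGraph.degree]
      ring
  have hfiltsum : ∀ (c : Fin n) (r : ℝ),
      ∑ j ∈ S, (if G.Adj c j then r else 0) = ((S.filter (G.Adj c)).card : ℝ) * r := by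
    intro c r
    rw [← Finset.sum_filter, Finset.sum_const, nsmul_eq_mul]
  -- inner sum at a
  have hinnerA : ∑ j, (if G.Adj a j then (y a - y j) ^ 2 else 0)
      = (if G.Adj a b then 1 else 0) * (y a - y b)^2 + ((G.degree a : ℝ) - (if G.Adj a b then 1 else 0)) * (y a)^2 := by
    rw [hsplit]
    have h1 : (if G.Adj a a then (y a - y a) ^ 2 else 0) = 0 := by simp
    have h2 : ∑ j ∈ S, (if G.Adj a j then (y a - y j) ^ 2 else 0)
        = ∑ j ∈ S, (if G.Adj a j then (y a) ^ 2 else 0) := by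
      apply Finset.sum_congr rfl
      intro j hj
      rw [hsupp j ((hmemS j).1 hj).1 ((hmemS j).1 hj).2, sub_zero]
    rw [h1, h2, hfiltsum, hcardA]
    by_cases h : G.Adj a b <;> simp [h] <;> ring
  have hinnerB : ∑ j, (if G.Adj b j then (y b - y j) ^ 2 else 0)
      = (if G.Adj a b then 1 else 0) * (y a - y b)^2 + ((G.degree b : ℝ) - (if G.Adj a b then 1 else 0)) * (y b)^2 := by
    rw [hsplit]
    have h1 : (if G.Adj b b then (y b - y b) ^ 2 else 0) = 0 := by simp
    have h2 : ∑ j ∈ S, (if G.Adj b j then (y b - y j) ^ 2 else 0)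
        = ∑ j ∈ S, (if G.Adj b j then (y b) ^ 2 else 0) := by
      apply Finset.sum_congr rfl
      intro j hj
      rw [hsupp j ((hmemS j).1 hj).1 ((hmemS j).1 hj).2, sub_zero]
    rw [h1, h2, hfiltsum, hcardB]
    have hcomm : G.Adj b a ↔ G.Adj a b := G.adj_comm b a
    by_cases h : G.Adj a b <;> simp [h, hcomm] <;> ring
  -- inner sum at i ∈ S
  have hinnerS : ∑ i ∈ S, ∑ j, (if G.Adj i j then (y i - y j) ^ 2 else 0)
      = ((G.degree a : ℝ) - (if G.Adj a b then 1 else 0)) * (y a)^2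
        + ((G.degree b : ℝ) - (if G.Adj a b then 1 else 0)) * (y b)^2 := by
    have hin : ∀ i ∈ S, ∑ j, (if G.Adj i j then (y i - y j) ^ 2 else 0)
        = (if G.Adj i a then (y a)^2 else 0) + (if G.Adj i b then (y b)^2 else 0) := by
      intro i hi
      have hyi : y i = 0 := hsupp i ((hmemS i).1 hi).1 ((hmemS i).1 hi).2
      rw [hsplit]
      have h3 : ∑ j ∈ S, (if G.Adj i j then (y i - y j) ^ 2 else 0) = 0 := by
        apply Finset.sum_eq_zero
        intro j hj
        rw [hsupp j ((hmemS j).1 hj).1 ((hmemS j).1 hj).2, hyi]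
        simp
      rw [h3, hyi]
      simp [zero_sub, neg_sq]
    rw [Finset.sum_congr rfl hin, Finset.sum_add_distrib]
    have e1 : ∑ i ∈ S, (if G.Adj i a then (y a)^2 else 0)
        = ∑ i ∈ S, (if G.Adj a i then (y a)^2 else 0) := by
      apply Finset.sum_congr rfl; intro i _; rw [G.adj_comm]
    have e2 : ∑ i ∈ S, (if G.Adj i b then (y b)^2 else 0)
        = ∑ i ∈ S, (if G.Adj b i then (y b)^2 else 0) := by
      apply Finset.sum_congr rfl; intro i _; rw [G.adj_comm]
    rw [e1, e2, hfiltsum, hfiltsum, hcardA, hcardB]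
  rw [quadForm, hsplit, hinnerA, hinnerB, hinnerS]
  ring


theorem l1_two_support_bound {n : ℕ} (G : SimpleGraph (Fin n)) (x : Fin n → ℝ) (a b : Fin n)
    (hab : a ≠ b) (hx1 : pNorm 1 x = 1) (hxa : 0 < x a) (hxb : x b < 0)
    (hsupp : ∀ i, i ≠ a → i ≠ b → x i = 0) (hdeg : G.degree b ≤ G.degree a) :
    quadForm G x ≤ (G.degree a : ℝ) ∧
    quadForm G (fun i => if i = a then (1 : ℝ) else 0) = (G.degree a : ℝ) ∧
    (quadForm G x = (G.degree a : ℝ) ↔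
      G.degree a = G.degree b ∧ G.degree a = (if G.Adj a b then 1 else 0)) := by
  classical
  set ε : ℝ := if G.Adj a b then 1 else 0 with hε
  have hQx := quadForm_two_support G x a b hab hsupp
  rw [← hε] at hQx
  have hQe : quadForm G (fun i => if i = a then (1 : ℝ) else 0) = (G.degree a : ℝ) := by
    have h := quadForm_two_support G (fun i => if i = a then (1 : ℝ) else 0) a b hab
      (by intro i hia _; simp [hia])
    rw [← hε] at h
    rw [h]
    simp only [if_pos rfl, if_neg (Ne.symm hab)]
    norm_num
  -- norm fact
  have hst : x a - x b = 1 := by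
    have habs : ∀ i, |x i| = (if i = a then x a else 0) + (if i = b then -x b else 0) := by
      intro i
      by_cases hia : i = a
      · subst hia; rw [if_pos rfl, if_neg hab, abs_of_pos hxa]; ring
      · by_cases hib : i = b
        · subst hib; rw [if_neg hia, if_pos rfl, abs_of_neg hxb]; ring
        · rw [hsupp i hia hib, if_neg hia, if_neg hib, abs_zero]; ring
    have hsum : ∑ i, |x i| = 1 := by
      have := hx1
      simp only [pNorm, Real.rpow_one, one_div_one] at this
      simpa using this
    rw [Finset.sum_congr rfl (fun i _ => habs i), Finset.sum_add_distrib,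
      Finset.sum_ite_eq' Finset.univ a, Finset.sum_ite_eq' Finset.univ b,
      if_pos (Finset.mem_univ a), if_pos (Finset.mem_univ b)] at hsum
    linarith
  have hε0 : 0 ≤ ε := by rw [hε]; split <;> norm_num
  have hεb : ε ≤ (G.degree b : ℝ) := by
    rw [hε]
    split
    · rename_i h
      have : a ∈ G.neighborFinset b := by
        simpa [SimpleGraph.mem_neighborFinset] using h.symm
      have : 1 ≤ (G.neighborFinset b).card := Finset.card_pos.2 ⟨a, this⟩
      exact_mod_cast this
    · positivity
  have hba : (G.degree b : ℝ) ≤ (G.degree a : ℝ) := by exact_mod_cast hdeg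
  have hεa : ε ≤ (G.degree a : ℝ) := le_trans hεb hba
  have hst2 : 0 < -2 * x a * x b := by nlinarith
  have h1 : 0 ≤ ((G.degree a : ℝ) - ε) * (-2 * x a * x b) :=
    mul_nonneg (by linarith) (le_of_lt hst2)
  have h2 : 0 ≤ ((G.degree a : ℝ) - (G.degree b : ℝ)) * (x b) ^ 2 :=
    mul_nonneg (by linarith) (sq_nonneg _)
  have hid : (G.degree a : ℝ) - (((G.degree a : ℝ) - ε) * x a ^ 2 + ((G.degree b : ℝ) - ε) * x b ^ 2 + ε * (x a - x b) ^ 2)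
      = ((G.degree a : ℝ) - ε) * (-2 * x a * x b) + ((G.degree a : ℝ) - (G.degree b : ℝ)) * (x b) ^ 2 := by
    linear_combination (-(G.degree a : ℝ)) * (x a - x b + 1) * hst
  refine ⟨?_, hQe, ?_⟩
  · rw [hQx]; linarith [h1, h2, hid]
  constructor
  · intro heq
    rw [hQx] at heq
    have key : ((G.degree a : ℝ) - ε) * (-2 * x a * x b)
        + ((G.degree a : ℝ) - (G.degree b : ℝ)) * (x b) ^ 2 = 0 := by
      linarith [hid, heq]
    have hz1 : ((G.degree a : ℝ) - ε) * (-2 * x a * x b) = 0 := le_antisymm (by linarith) h1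
    have hz2 : ((G.degree a : ℝ) - (G.degree b : ℝ)) * (x b) ^ 2 = 0 :=
      le_antisymm (by linarith) h2
    have hda : (G.degree a : ℝ) = ε := by
      rcases mul_eq_zero.1 hz1 with h | h
      · linarith
      · exfalso; linarith
    have hdb : (G.degree a : ℝ) = (G.degree b : ℝ) := by
      rcases mul_eq_zero.1 hz2 with h | h
      · linarith
      · exfalso; nlinarith
    constructor
    · exact_mod_cast hdb
    · rw [hε] at hda
      by_cases h : G.Adj a b
      · rw [if_pos h] at hda ⊢; exact_mod_cast hda
      · rw [if_neg h] at hda ⊢; exact_mod_cast hda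
  · rintro ⟨h1n, h2n⟩
    have hae : (G.degree a : ℝ) = ε := by
      rw [hε]
      by_cases h : G.Adj a b
      · rw [if_pos h]; rw [if_pos h] at h2n; exact_mod_cast h2n
      · rw [if_neg h]; rw [if_neg h] at h2n; exact_mod_cast h2n
    have hbe : (G.degree b : ℝ) = ε := by rw [← hae]; exact_mod_cast h1n.symm
    rw [hQx, hae, hbe, hst]
    ring
end

section
/- For any finite simple graph G with at least one edge, μ^{(1)}(G) := max_{‖x‖_1 = 1} ∑_{ij∈E}(x_i - x_j)^2 equals the maximum degree Δ(G) of G. -/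
open scoped Classical
open Finset

lemma row_sum {n : ℕ} (G : SimpleGraph (Fin n)) (i : Fin n) (r : ℝ) :
    ∑ j, (if G.Adj i j then r else 0) = (G.degree i : ℝ) * r := by
  classical
  rw [← Finset.sum_filter, Finset.sum_const, nsmul_eq_mul]
  congr 1
  rw [SimpleGraph.degree, SimpleGraph.neighborFinset_eq_filter]

theorem mu_one_eq_maxDegree {n : ℕ} (G : SimpleGraph (Fin n)) (hE : ∃ a b, G.Adj a b) :
    IsGreatest {y | ∃ x : Fin n → ℝ, pNorm 1 x = 1 ∧ quadForm G x = y}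
      (G.maxDegree : ℝ) := by
  classical
  obtain ⟨a, b, hab⟩ := hE
  have hne : Nonempty (Fin n) := ⟨a⟩
  have hΔ1 : (1 : ℕ) ≤ G.maxDegree := by
    have h1 : 0 < G.degree a := by
      rw [G.degree_pos_iff_exists_adj]; exact ⟨b, hab⟩
    exact le_trans h1 (G.degree_le_maxDegree a)
  constructor
  · obtain ⟨v, hv⟩ := G.exists_maximal_degree_vertex
    refine ⟨fun i => if i = v then 1 else 0, ?_, ?_⟩
    · simp [pNorm, apply_ite]
    · have hq : ∀ i j : Fin n, (if G.Adj i j then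
          (((if i = v then (1:ℝ) else 0)) - ((if j = v then (1:ℝ) else 0))) ^ 2 else 0)
          = (if G.Adj i j then (if i = v then (1:ℝ) else 0) else 0)
            + (if G.Adj i j then (if j = v then (1:ℝ) else 0) else 0) := by
        intro i j
        by_cases h : G.Adj i j
        · have hij : i ≠ j := G.ne_of_adj h
          simp only [if_pos h]
          by_cases hi : i = v <;> by_cases hj : j = v <;>
            simp_all <;> ring
        · simp [h]
      unfold quadForm
      rw [hv]
      have : ∑ i, ∑ j, (if G.Adj i j then
          (((if i = v then (1:ℝ) else 0)) - ((if j = v then (1:ℝ) else 0))) ^ 2 else 0)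
          = 2 * (G.degree v : ℝ) := by
        simp_rw [hq, Finset.sum_add_distrib]
        have h1 : ∑ i, ∑ j, (if G.Adj i j then (if i = v then (1:ℝ) else 0) else 0)
            = (G.degree v : ℝ) := by
          have : ∀ i : Fin n, ∑ j, (if G.Adj i j then (if i = v then (1:ℝ) else 0) else 0)
              = (G.degree i : ℝ) * (if i = v then (1:ℝ) else 0) := fun i => row_sum G i _
          simp_rw [this]
          simp [mul_ite]
        have h2 : ∑ i, ∑ j, (if G.Adj i j then (if j = v then (1:ℝ) else 0) else 0)
            = (G.degree v : ℝ) := by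
          rw [Finset.sum_comm]
          simp_rw [G.adj_comm]
          have : ∀ j : Fin n, ∑ i, (if G.Adj j i then (if j = v then (1:ℝ) else 0) else 0)
              = (G.degree j : ℝ) * (if j = v then (1:ℝ) else 0) := fun j => row_sum G j _
          simp_rw [this]
          simp [mul_ite]
        rw [h1, h2]; ring
      rw [this]; ring
  · rintro y ⟨x, hx, rfl⟩
    set A : ℝ := (G.maxDegree : ℝ) with hA
    have hA1 : (1:ℝ) ≤ A := by rw [hA]; exact_mod_cast hΔ1
    have hS : ∑ i, |x i| = 1 := by
      simpa [pNorm, Real.rpow_one] using hx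
    set a : Fin n → ℝ := fun i => |x i| with ha
    have hann : ∀ i, 0 ≤ a i := fun i => abs_nonneg _
    -- step 1: bound by abs
    have step1 : ∑ i, ∑ j, (if G.Adj i j then (x i - x j)^2 else 0)
        ≤ ∑ i, ∑ j, (if G.Adj i j then (a i + a j)^2 else 0) := by
      apply Finset.sum_le_sum; intro i _
      apply Finset.sum_le_sum; intro j _
      by_cases h : G.Adj i j
      · simp only [if_pos h]
        have h1 : |x i - x j| ≤ a i + a j := (abs_sub _ _)
        calc (x i - x j)^2 = |x i - x j|^2 := (sq_abs _).symm
          _ ≤ (a i + a j)^2 := by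
              apply pow_le_pow_left₀ (abs_nonneg _) h1
      · simp [h]
    -- expand square
    have expand : ∑ i, ∑ j, (if G.Adj i j then (a i + a j)^2 else 0)
        = (∑ i, ∑ j, (if G.Adj i j then a i ^ 2 else 0))
        + (∑ i, ∑ j, (if G.Adj i j then a j ^ 2 else 0))
        + (∑ i, ∑ j, (if G.Adj i j then 2 * a i * a j else 0)) := by
      rw [← Finset.sum_add_distrib, ← Finset.sum_add_distrib]
      apply Finset.sum_congr rfl; intro i _
      rw [← Finset.sum_add_distrib, ← Finset.sum_add_distrib]
      apply Finset.sum_congr rfl; intro j _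
      by_cases h : G.Adj i j <;> simp [h] <;> ring
    have t1 : ∑ i, ∑ j, (if G.Adj i j then a i ^ 2 else 0)
        ≤ A * ∑ i, a i ^ 2 := by
      have : ∀ i : Fin n, ∑ j, (if G.Adj i j then a i ^ 2 else 0)
          = (G.degree i : ℝ) * a i ^ 2 := fun i => row_sum G i _
      simp_rw [this, Finset.mul_sum]
      apply Finset.sum_le_sum; intro i _
      apply mul_le_mul_of_nonneg_right _ (sq_nonneg _)
      rw [hA]
      exact_mod_cast G.degree_le_maxDegree i
    have t1' : ∑ i, ∑ j, (if G.Adj i j then a j ^ 2 else 0)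
        ≤ A * ∑ i, a i ^ 2 := by
      rw [Finset.sum_comm]
      simp_rw [G.adj_comm]
      exact t1
    have t2 : ∑ i, ∑ j, (if G.Adj i j then 2 * a i * a j else 0)
        ≤ ∑ i, ∑ j, (if i = j then 0 else 2 * a i * a j) := by
      apply Finset.sum_le_sum; intro i _
      apply Finset.sum_le_sum; intro j _
      by_cases h : G.Adj i j
      · have hij : i ≠ j := G.ne_of_adj h
        simp [h, hij]
      · by_cases hij : i = j
        · simp [h, hij]
        · simp only [if_neg h, if_neg hij]
          positivity
    have offdiag : ∑ i, ∑ j, (if i = j then 0 else 2 * a i * a j)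
        = 2 * (1 - ∑ i, a i ^ 2) := by
      have key : ∑ i, ∑ j, a i * a j = 1 := by
        rw [← Finset.sum_mul_sum]
        rw [hS]; ring
      have split : ∀ i : Fin n, ∑ j, a i * a j
          = a i ^ 2 + ∑ j, (if i = j then 0 else a i * a j) := by
        intro i
        have : ∑ j, a i * a j
            = ∑ j, ((if i = j then a i * a j else 0) + (if i = j then 0 else a i * a j)) := by
          apply Finset.sum_congr rfl; intro j _
          by_cases h : i = j <;> simp [h]
        rw [this, Finset.sum_add_distrib, Finset.sum_ite_eq]
        simp [sq]
      have : ∑ i, ∑ j, (if i = j then 0 else a i * a j) = 1 - ∑ i, a i ^ 2 := by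
        have := key
        simp_rw [split] at this
        rw [Finset.sum_add_distrib] at this
        linarith
      calc ∑ i, ∑ j, (if i = j then 0 else 2 * a i * a j)
          = 2 * ∑ i, ∑ j, (if i = j then 0 else a i * a j) := by
            rw [Finset.mul_sum]
            apply Finset.sum_congr rfl; intro i _
            rw [Finset.mul_sum]
            apply Finset.sum_congr rfl; intro j _
            by_cases h : i = j <;> simp [h] <;> ring
        _ = 2 * (1 - ∑ i, a i ^ 2) := by rw [this]
    have hsq_le : ∑ i, a i ^ 2 ≤ 1 := by
      have h1 : ∀ i, a i ≤ 1 := by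
        intro i
        rw [← hS]
        exact Finset.single_le_sum (fun j _ => hann j) (Finset.mem_univ i)
      have : ∑ i, a i ^ 2 ≤ ∑ i, a i :=
        Finset.sum_le_sum fun i _ => by nlinarith [hann i, h1 i]
      linarith
    -- final
    have t2' : ∑ i, ∑ j, (if G.Adj i j then 2 * a i * a j else 0)
        ≤ A * (2 * (1 - ∑ i, a i ^ 2)) := by
      have h0 : 0 ≤ 2 * (1 - ∑ i, a i ^ 2) := by linarith
      calc ∑ i, ∑ j, (if G.Adj i j then 2 * a i * a j else 0)
          ≤ 2 * (1 - ∑ i, a i ^ 2) := by rw [← offdiag]; exact t2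
        _ ≤ A * (2 * (1 - ∑ i, a i ^ 2)) := le_mul_of_one_le_left h0 hA1
    unfold quadForm
    have := step1
    rw [expand] at this
    have final : ∑ i, ∑ j, (if G.Adj i j then (x i - x j)^2 else 0) ≤ 2 * A := by
      calc ∑ i, ∑ j, (if G.Adj i j then (x i - x j)^2 else 0)
          ≤ A * (∑ i, a i ^ 2) + A * (∑ i, a i ^ 2) + A * (2 * (1 - ∑ i, a i ^ 2)) := by
            linarith [t1, t1', t2']
        _ = 2 * A := by ring
    linarith
end

section
/- Let G = (V,E) be a graph with at least one edge and let x ∈ R^n with ‖x‖_∞ = 1 maximize F_G(x) = ∑_{ij∈E}(x_i - x_j)^2 over the ℓ∞ unit ball, and assume G has no isolated vertices. Then |x_i| = 1 for all i ∈ V. -/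
open scoped Classical
open Finset

lemma quad_update {n : ℕ} (G : SimpleGraph (Fin n)) (x : Fin n → ℝ) (i : Fin n) (s : ℝ) :
    quadForm G (Function.update x i s)
      = (∑ j, if G.Adj i j then (s - x j) ^ 2 else 0)
        + (∑ a ∈ Finset.univ.erase i, ∑ b ∈ Finset.univ.erase i,
            if G.Adj a b then (x a - x b) ^ 2 else 0) / 2 := by
  have key : (∑ a, ∑ b, if G.Adj a b then
        (Function.update x i s a - Function.update x i s b) ^ 2 else 0)
      = 2 * (∑ j, if G.Adj i j then (s - x j) ^ 2 else 0)
        + ∑ a ∈ Finset.univ.erase i, ∑ b ∈ Finset.univ.erase i,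
            if G.Adj a b then (x a - x b) ^ 2 else 0 := by
    rw [← Finset.add_sum_erase _ _ (Finset.mem_univ i)]
    have h1 : (∑ b, if G.Adj i b then
          (Function.update x i s i - Function.update x i s b) ^ 2 else 0)
        = ∑ j, if G.Adj i j then (s - x j) ^ 2 else 0 := by
      apply Finset.sum_congr rfl
      intro b _
      by_cases hb : b = i
      · simp [hb]
      · simp [Function.update_of_ne hb, Function.update_self]
    rw [h1]
    have h2 : ∀ a ∈ Finset.univ.erase i,
        (∑ b, if G.Adj a b then
            (Function.update x i s a - Function.update x i s b) ^ 2 else 0)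
        = (if G.Adj a i then (x a - s) ^ 2 else 0)
          + ∑ b ∈ Finset.univ.erase i, if G.Adj a b then (x a - x b) ^ 2 else 0 := by
      intro a ha
      have hai : a ≠ i := Finset.ne_of_mem_erase ha
      rw [← Finset.add_sum_erase _ _ (Finset.mem_univ i)]
      congr 1
      · simp [Function.update_of_ne hai, Function.update_self]
      · apply Finset.sum_congr rfl
        intro b hb
        have hbi : b ≠ i := Finset.ne_of_mem_erase hb
        simp [Function.update_of_ne hai, Function.update_of_ne hbi]
    rw [Finset.sum_congr rfl h2, Finset.sum_add_distrib]
    have h3 : (∑ a ∈ Finset.univ.erase i, if G.Adj a i then (x a - s) ^ 2 else 0)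
        = ∑ j, if G.Adj i j then (s - x j) ^ 2 else 0 := by
      rw [← Finset.add_sum_erase _ (fun j => if G.Adj i j then (s - x j) ^ 2 else 0)
        (Finset.mem_univ i)]
      simp only [G.irrefl, if_false, zero_add]
      apply Finset.sum_congr rfl
      intro b hb
      have hsym : G.Adj b i ↔ G.Adj i b := G.adj_comm b i
      rw [show (x b - s) ^ 2 = (s - x b) ^ 2 by ring, if_congr hsym rfl rfl]
    rw [h3]; ring
  unfold quadForm
  rw [key]; ring

theorem linf_maximizer_entries_abs_one {n : ℕ} (G : SimpleGraph (Fin n))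
    (hE : ∃ a b, G.Adj a b) (hiso : ∀ i, ∃ j, G.Adj i j)
    (x : Fin n → ℝ) (hx : supNorm x = 1)
    (hmax : ∀ y : Fin n → ℝ, supNorm y ≤ 1 → quadForm G y ≤ quadForm G x) :
    ∀ i, |x i| = 1 := by
  intro i
  by_contra h
  have hbd : ∀ j, |x j| ≤ 1 := by
    intro j
    rw [← hx]
    exact le_ciSup (Set.Finite.bddAbove (Set.finite_range fun j => |x j|)) j
  have hlt : |x i| < 1 := (hbd i).lt_of_ne h
  obtain ⟨k, hk⟩ := hiso i
  set t : ℝ := x i with htdef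
  have ht1 : -1 < t := (abs_lt.mp hlt).1
  have ht2 : t < 1 := (abs_lt.mp hlt).2
  set q : ℝ → ℝ := fun s => ∑ j, if G.Adj i j then (s - x j) ^ 2 else 0 with hq
  set d : ℝ := ∑ j, if G.Adj i j then (1 : ℝ) else 0 with hd
  set S1 : ℝ := ∑ j, if G.Adj i j then x j else 0 with hS1
  set E : ℝ := ∑ j, if G.Adj i j then (x j) ^ 2 else 0 with hEdef
  have hqform : ∀ s : ℝ, q s = d * s ^ 2 - 2 * s * S1 + E := by
    intro s
    simp only [hq, hd, hS1, hEdef, Finset.mul_sum, Finset.sum_mul, ← Finset.sum_sub_distrib,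
      ← Finset.sum_add_distrib]
    apply Finset.sum_congr rfl
    intro j _
    by_cases hj : G.Adj i j <;> simp [hj] <;> ring
  have hdpos : (0 : ℝ) < d := by
    have h1k := Finset.single_le_sum (f := fun j => if G.Adj i j then (1 : ℝ) else 0)
      (fun j _ => by positivity) (Finset.mem_univ k)
    simp only [if_pos hk] at h1k
    linarith
  -- choose the sign
  set s : ℝ := if 0 ≤ S1 then -1 else 1 with hs
  have hs1 : |s| = 1 := by
    rw [hs]; split <;> simp
  have hqlt : q t < q s := by
    rw [hqform, hqform]
    have hst : s ^ 2 = 1 := by rw [hs]; split <;> ring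
    rw [hst]
    have h1 : d * t ^ 2 < d * 1 := by
      apply mul_lt_mul_of_pos_left _ hdpos
      nlinarith
    by_cases hS : 0 ≤ S1
    · have hsv : s = -1 := by rw [hs, if_pos hS]
      rw [hsv]
      nlinarith
    · have hsv : s = 1 := by rw [hs, if_neg hS]
      rw [hsv]
      push_neg at hS
      nlinarith
  have hne : Nonempty (Fin n) := ⟨i⟩
  have hsup : supNorm (Function.update x i s) ≤ 1 := by
    unfold supNorm
    apply ciSup_le
    intro j
    by_cases hj : j = i
    · subst hj; simp [hs1]
    · simp [Function.update_of_ne hj, hbd j]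
  have hle := hmax _ hsup
  rw [quad_update] at hle
  have hx' : quadForm G x = q t
      + (∑ a ∈ Finset.univ.erase i, ∑ b ∈ Finset.univ.erase i,
          if G.Adj a b then (x a - x b) ^ 2 else 0) / 2 := by
    conv_lhs => rw [← Function.update_eq_self i x]
    rw [quad_update]
  rw [hx'] at hle
  have : q s ≤ q t := by linarith
  linarith
end

section
/- Let G be a graph with at least one edge and p > 1. Then for every vertex i, the standard basis vector e_i does not maximize F_G(x) = ∑_{jk∈E}(x_j - x_k)^2 over the p-norm unit sphere; that is, F_G(e_i) < μ^{(p)}(G), provided vertex i is not isolated. -/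
open scoped Classical
open Finset

/-! Along an edge `ij`, move from `e_i` to `t e_i - s e_j` with `t ^ p + s ^ p = 1`. The
Laplacian form changes by `deg i (t ^ 2 - 1) + 2 t s + deg j s ^ 2`: the gain `2 t s` is of order
`s`, while the loss `deg i (1 - t ^ 2)` is of order `s ^ p`, because `1 - t ≤ 1 - t ^ p = s ^ p`.
Since `p > 1`, the gain wins for small `s`. -/

open Matrix

namespace SimpleGraph

variable {V : Type*} [Fintype V] [DecidableEq V] (G : SimpleGraph V)

theorem quadForm_eq_dotProduct_lapMatrix_mulVec (x : V → ℝ) :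
    quadForm G x = x ⬝ᵥ (G.lapMatrix ℝ *ᵥ x) := by
  rw [quadForm, ← lapMatrix_toLinearMap₂', toLinearMap₂'_apply']

theorem quadForm_single (i : V) (c : ℝ) : quadForm G (Pi.single i c) = G.degree i * c ^ 2 := by
  simp only [quadForm_eq_dotProduct_lapMatrix_mulVec, lapMatrix, degMatrix, mulVec_single,
    op_smul_eq_smul, dotProduct_smul, single_dotProduct, col_apply, Matrix.sub_apply,
    diagonal_apply_eq, adjMatrix_apply, SimpleGraph.irrefl, ↓reduceIte, sub_zero, smul_eq_mul]
  ring

theorem quadForm_single_sub_single {i j : V} (h : G.Adj i j) (t s : ℝ) :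
    quadForm G (Pi.single i t - Pi.single j s) =
      G.degree i * t ^ 2 + 2 * t * s + G.degree j * s ^ 2 := by
  simp only [quadForm_eq_dotProduct_lapMatrix_mulVec, lapMatrix, degMatrix, mulVec_sub,
    mulVec_single, op_smul_eq_smul, dotProduct_sub, dotProduct_smul, sub_dotProduct,
    single_dotProduct, col_apply, Matrix.sub_apply, diagonal_apply_eq, adjMatrix_apply,
    SimpleGraph.irrefl, ↓reduceIte, sub_zero, ne_eq, h.ne, h.ne', not_false_eq_true,
    diagonal_apply_ne, h, h.symm, zero_sub, mul_neg, mul_one, sub_neg_eq_add, smul_eq_mul]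
  ring

end SimpleGraph

section pNorm

variable {V : Type*} [Fintype V] {p : ℝ}

theorem pNorm_single_sub_single [DecidableEq V] (hp : p ≠ 0) {i j : V} (hij : i ≠ j) (t s : ℝ) :
    pNorm p (Pi.single i t - Pi.single j s) = (|t| ^ p + |s| ^ p) ^ (1 / p) := by
  rw [pNorm, Fintype.sum_eq_add i j hij]
  · simp [hij, hij.symm]
  · rintro k ⟨hki, hkj⟩
    simp [hki, hkj, Real.zero_rpow hp]

theorem sum_abs_rpow_eq_one_of_pNorm_eq_one (hp : p ≠ 0) {x : V → ℝ} (hx : pNorm p x = 1) :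
    ∑ k, |x k| ^ p = 1 := by
  rw [pNorm, one_div] at hx
  rw [← Real.rpow_inv_rpow (x := ∑ k, |x k| ^ p) (by positivity) hp, hx, Real.one_rpow]

theorem abs_le_one_of_pNorm_eq_one (hp : 0 < p) {x : V → ℝ} (hx : pNorm p x = 1) (k : V) :
    |x k| ≤ 1 := by
  by_contra! hk
  have hsum := sum_abs_rpow_eq_one_of_pNorm_eq_one hp.ne' hx
  have hle : |x k| ^ p ≤ ∑ k, |x k| ^ p :=
    single_le_sum (f := fun k ↦ |x k| ^ p) (fun k _ ↦ by positivity) (mem_univ k)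
  linarith [Real.one_lt_rpow hk hp]

theorem quadForm_le_of_abs_le_one (G : SimpleGraph V) {x : V → ℝ} (hx : ∀ k, |x k| ≤ 1) :
    quadForm G x ≤ 2 * Fintype.card V ^ 2 := by
  have hterm : ∀ a b, (if G.Adj a b then (x a - x b) ^ 2 else 0) ≤ (4 : ℝ) := by
    intro a b
    have ha := abs_le.mp (hx a)
    have hb := abs_le.mp (hx b)
    split_ifs <;> nlinarith
  have hsum : ∑ a, ∑ b, (if G.Adj a b then (x a - x b) ^ 2 else 0) ≤ ∑ _a : V, ∑ _b : V, (4 : ℝ) :=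
    sum_le_sum fun a _ ↦ sum_le_sum fun b _ ↦ hterm a b
  simp only [sum_const, card_univ, nsmul_eq_mul] at hsum
  rw [quadForm]
  linarith

theorem quadForm_le_mu (G : SimpleGraph V) (hp : 0 < p) {x : V → ℝ} (hx : pNorm p x = 1) :
    quadForm G x ≤ mu G p := by
  refine le_csSup ⟨2 * Fintype.card V ^ 2, ?_⟩ ⟨x, hx, rfl⟩
  rintro _ ⟨y, hy, rfl⟩
  exact quadForm_le_of_abs_le_one G (abs_le_one_of_pNorm_eq_one hp hy)

end pNorm

theorem exists_pos_lt_one_mul_rpow_lt_one (c : ℝ) {q : ℝ} (hq : 0 < q) :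
    ∃ s : ℝ, 0 < s ∧ s < 1 ∧ c * s ^ q < 1 := by
  have hlim : Filter.Tendsto (fun s : ℝ ↦ c * s ^ q) (nhdsWithin 0 (Set.Ioi 0)) (nhds 0) := by
    have := ((Real.continuousAt_rpow_const 0 q (Or.inr hq.le)).const_mul c).tendsto
    simpa [Real.zero_rpow hq.ne'] using this.mono_left nhdsWithin_le_nhds
  have hpos : ∀ᶠ s in nhdsWithin (0 : ℝ) (Set.Ioi 0), 0 < s := self_mem_nhdsWithin
  have hlt : ∀ᶠ s in nhdsWithin (0 : ℝ) (Set.Ioi 0), s < 1 :=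
    nhdsWithin_le_nhds (gt_mem_nhds one_pos)
  exact (hpos.and (hlt.and (hlim.eventually (gt_mem_nhds one_pos)))).exists

theorem lt_mul_sq_add_two_mul_of_rpow_add_rpow_eq_one {d p s t : ℝ} (hd : 0 ≤ d) (hp : 1 < p)
    (hs : 0 < s) (hs1 : s < 1) (hsd : (d + 1) * s ^ (p - 1) < 1) (ht : 0 ≤ t) (ht1 : t ≤ 1)
    (hst : t ^ p + s ^ p = 1) : d < d * t ^ 2 + 2 * t * s := by
  have hsp : s ^ p = s * s ^ (p - 1) := by
    rw [Real.rpow_sub_one hs.ne']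
    field_simp
  have htp : t ^ p ≤ t := Real.rpow_le_self_of_le_one ht ht1 hp.le
  have hu : 0 < s ^ (p - 1) := by positivity
  have hdu : d * s ^ (p - 1) < 1 - s * s ^ (p - 1) := by
    nlinarith [mul_lt_mul_of_pos_right hs1 hu]
  have hloss : d * (1 - t ^ 2) ≤ 2 * d * s ^ p := by
    nlinarith [mul_nonneg hd (sq_nonneg (1 - t))]
  have hgain : d * s ^ p < s * t := by
    rw [hsp]
    nlinarith [mul_lt_mul_of_pos_left hdu hs]
  linarith

theorem exists_rpow_add_rpow_eq_one_and_lt {d p : ℝ} (hd : 0 ≤ d) (hp : 1 < p) :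
    ∃ s t : ℝ, 0 ≤ s ∧ 0 ≤ t ∧ t ^ p + s ^ p = 1 ∧ d < d * t ^ 2 + 2 * t * s := by
  obtain ⟨s, hs, hs1, hsd⟩ := exists_pos_lt_one_mul_rpow_lt_one (d + 1) (sub_pos.mpr hp)
  have hp0 : 0 < p := zero_lt_one.trans hp
  have hsp : s ^ p ≤ 1 := Real.rpow_le_one hs.le hs1.le hp0.le
  set t := (1 - s ^ p) ^ (1 / p)
  have htp : t ^ p = 1 - s ^ p := by
    rw [← Real.rpow_mul (by linarith), one_div_mul_cancel hp0.ne', Real.rpow_one]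
  have ht : 0 ≤ t := by positivity
  have ht1 : t ≤ 1 :=
    Real.rpow_le_one (by linarith) (by linarith [Real.rpow_nonneg hs.le p]) (by positivity)
  exact ⟨s, t, hs.le, ht, by linarith,
    lt_mul_sq_add_two_mul_of_rpow_add_rpow_eq_one hd hp hs hs1 hsd ht ht1 (by linarith)⟩

theorem basis_vector_not_maximizer {n : ℕ} (G : SimpleGraph (Fin n)) (p : ℝ) (hp : 1 < p)
    (i : Fin n) (hi : ∃ j, G.Adj i j) :
    quadForm G (fun k => if k = i then (1 : ℝ) else 0) < mu G p := by
  obtain ⟨j, hij⟩ := hi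
  have hp0 : 0 < p := zero_lt_one.trans hp
  obtain ⟨s, t, hs, ht, hst, hlt⟩ :=
    exists_rpow_add_rpow_eq_one_and_lt (d := G.degree i) (by positivity) hp
  have hy : pNorm p (Pi.single i t - Pi.single j s) = 1 := by
    rw [pNorm_single_sub_single hp0.ne' hij.ne, abs_of_nonneg ht, abs_of_nonneg hs, hst,
      Real.one_rpow]
  have he : (fun k => if k = i then (1 : ℝ) else 0) = Pi.single i 1 :=
    funext fun k ↦ (Pi.single_apply i 1 k).symm
  calc quadForm G (fun k => if k = i then (1 : ℝ) else 0) = G.degree i := by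
        rw [he, G.quadForm_single, one_pow, mul_one]
    _ < G.degree i * t ^ 2 + 2 * t * s := hlt
    _ ≤ G.degree i * t ^ 2 + 2 * t * s + G.degree j * s ^ 2 :=
        le_add_of_nonneg_right (by positivity)
    _ = quadForm G (Pi.single i t - Pi.single j s) := by rw [G.quadForm_single_sub_single hij]
    _ ≤ mu G p := quadForm_le_mu G hp0 hy
end

section
/- Let K_{s,t} be the complete bipartite graph with classes of sizes s and t, and p ≥ 2. Then μ^{(p)}(K_{s,t}) = s·t·(a + b)², where a = (s + t·(s/t)^{p/(p−1)})^{−1/p} and b = (s/t)^{1/(p−1)} · a. -/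
open scoped Classical
open Finset

/-!
Write `u` and `v` for the restrictions of `x` to the two classes and `α`, `β` for their
`p`-power means. Since `(u_i - v_j)^2 ≤ (|u_i| + |v_j|)^2`, and for `p ≥ 2` the power-mean
inequality bounds the `1`- and `2`-means by the `p`-mean, the quadratic form is at most
`s t (α + β)^2`, where `s α^p + t β^p = ‖x‖_p^p = 1`. The point `(a, b)` satisfies this constraint
and the Lagrange condition `s a^(p-1) = t b^(p-1)`, so adding the tangent-line (Bernoulli)
inequalities for `z ↦ z^p` at `a` and at `b` gives `α + β ≤ a + b`. The vector equal to `a` on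
the first class and to `-b` on the second attains the bound.
-/

lemma pNorm_eq_one_iff {V : Type*} [Fintype V] {p : ℝ} (hp : 0 < p) (x : V → ℝ) :
    pNorm p x = 1 ↔ ∑ i, |x i| ^ p = 1 := by
  have hsum : 0 ≤ ∑ i, |x i| ^ p := sum_nonneg fun i _ => by positivity
  rw [pNorm, ← Real.rpow_left_inj (by positivity) zero_le_one hp.ne', ← Real.rpow_mul hsum,
    one_div_mul_cancel hp.ne', Real.rpow_one, Real.one_rpow]

lemma quadForm_completeBipartiteGraph {α β : Type*} [Fintype α] [Fintype β]
    (x : α ⊕ β → ℝ) :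
    quadForm (completeBipartiteGraph α β) x = ∑ i, ∑ j, (x (.inl i) - x (.inr j)) ^ 2 := by
  simp only [quadForm, Fintype.sum_sum_type, completeBipartiteGraph_adj, Sum.isLeft_inl,
    Sum.isRight_inl, Sum.isLeft_inr, Sum.isRight_inr, Bool.false_eq_true, and_false, and_true,
    or_self, or_false, or_true, ↓reduceIte, sum_const_zero, zero_add, add_zero]
  rw [sum_comm (γ := β)]
  simp only [sub_sq_comm (x (.inr _))]
  ring

section PowerMean

variable {ι : Type*} [Fintype ι]

noncomputable def powerMean (p : ℝ) (f : ι → ℝ) : ℝ :=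
  ((∑ i, |f i| ^ p) / Fintype.card ι) ^ (1 / p)

lemma powerMean_nonneg (p : ℝ) (f : ι → ℝ) : 0 ≤ powerMean p f :=
  Real.rpow_nonneg (div_nonneg (sum_nonneg fun i _ => by positivity) (Nat.cast_nonneg _)) _

lemma card_mul_powerMean_rpow {p : ℝ} (hp : p ≠ 0) (f : ι → ℝ) :
    Fintype.card ι * powerMean p f ^ p = ∑ i, |f i| ^ p := by
  rcases isEmpty_or_nonempty ι with hι | hι
  · simp
  rw [powerMean, one_div, Real.rpow_inv_rpow (by positivity) hp,
    mul_div_cancel₀ _ (by positivity)]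

lemma sum_abs_rpow_le_card_mul_powerMean_rpow {r p : ℝ} (hr : 0 < r) (hrp : r ≤ p)
    (f : ι → ℝ) : ∑ i, |f i| ^ r ≤ Fintype.card ι * powerMean p f ^ r := by
  rcases isEmpty_or_nonempty ι with hι | hι
  · simp
  have hn : (0 : ℝ) < Fintype.card ι := by positivity
  have hmean := Real.arith_mean_le_rpow_mean univ (fun _ => (Fintype.card ι : ℝ)⁻¹)
    (fun i => |f i| ^ r) (fun _ _ => by positivity) (by simp [hn.ne'])
    (fun _ _ => by positivity) ((one_le_div hr).2 hrp)
  simp only [← Real.rpow_mul (abs_nonneg _), mul_div_cancel₀ _ hr.ne', inv_mul_eq_div,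
    ← sum_div] at hmean
  rw [powerMean, ← Real.rpow_mul (by positivity), one_div_mul_eq_div, ← div_le_iff₀' hn]
  rwa [one_div_div] at hmean

end PowerMean

lemma quadForm_completeBipartiteGraph_le {α β : Type*} [Fintype α] [Fintype β] {p : ℝ}
    (hp : 2 ≤ p) (x : α ⊕ β → ℝ) :
    quadForm (completeBipartiteGraph α β) x ≤
      Fintype.card α * Fintype.card β *
        (powerMean p (x ∘ Sum.inl) + powerMean p (x ∘ Sum.inr)) ^ 2 := by
  set u := x ∘ Sum.inl
  set v := x ∘ Sum.inr
  have hu1 := sum_abs_rpow_le_card_mul_powerMean_rpow (p := p) one_pos (by linarith) u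
  have hv1 := sum_abs_rpow_le_card_mul_powerMean_rpow (p := p) one_pos (by linarith) v
  have hu2 := sum_abs_rpow_le_card_mul_powerMean_rpow two_pos hp u
  have hv2 := sum_abs_rpow_le_card_mul_powerMean_rpow two_pos hp v
  simp only [Real.rpow_one, Real.rpow_two, sq_abs] at hu1 hv1 hu2 hv2
  calc quadForm (completeBipartiteGraph α β) x
      ≤ ∑ i, ∑ j, (|u i| + |v j|) ^ 2 := by
        rw [quadForm_completeBipartiteGraph]
        refine sum_le_sum fun i _ => sum_le_sum fun j _ => ?_
        change (u i - v j) ^ 2 ≤ _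
        simpa only [sq_abs] using pow_le_pow_left₀ (abs_nonneg _) (abs_sub (u i) (v j)) 2
    _ = Fintype.card β * ∑ i, u i ^ 2 + Fintype.card α * ∑ j, v j ^ 2 +
          2 * (∑ i, |u i|) * ∑ j, |v j| := by
        rw [mul_assoc 2, sum_mul_sum, mul_sum]
        simp only [add_sq, sq_abs, sum_add_distrib, sum_const, card_univ, nsmul_eq_mul, mul_sum,
          mul_assoc]
        ring
    _ ≤ Fintype.card β * (Fintype.card α * powerMean p u ^ 2) +
          Fintype.card α * (Fintype.card β * powerMean p v ^ 2) +
          2 * (Fintype.card α * powerMean p u) * (Fintype.card β * powerMean p v) := by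
        have := powerMean_nonneg p u
        gcongr
    _ = _ := by ring

lemma rpow_add_mul_rpow_sub_one_mul_sub_le_rpow {p a x : ℝ} (hp : 1 ≤ p) (ha : 0 < a)
    (hx : 0 ≤ x) : a ^ p + p * a ^ (p - 1) * (x - a) ≤ x ^ p := by
  have hbernoulli := one_add_mul_self_le_rpow_one_add
    (s := x / a - 1) (by linarith [div_nonneg hx ha.le]) hp
  rw [add_sub_cancel, Real.div_rpow hx ha.le, le_div_iff₀ (by positivity)] at hbernoulli
  calc a ^ p + p * a ^ (p - 1) * (x - a) = (1 + p * (x / a - 1)) * a ^ p := by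
        rw [Real.rpow_sub_one ha.ne']
        field_simp
    _ ≤ x ^ p := hbernoulli

lemma add_le_add_of_mul_rpow_add_mul_rpow_le {p S T a b x y : ℝ} (hp : 1 ≤ p) (hS : 0 < S)
    (hT : 0 ≤ T) (ha : 0 < a) (hb : 0 < b) (hx : 0 ≤ x) (hy : 0 ≤ y)
    (hab : S * a ^ (p - 1) = T * b ^ (p - 1))
    (hxy : S * x ^ p + T * y ^ p ≤ S * a ^ p + T * b ^ p) : x + y ≤ a + b := by
  have htx := mul_le_mul_of_nonneg_left (rpow_add_mul_rpow_sub_one_mul_sub_le_rpow hp ha hx) hS.le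
  have hty := mul_le_mul_of_nonneg_left (rpow_add_mul_rpow_sub_one_mul_sub_le_rpow hp hb hy) hT
  have hlin : p * (S * a ^ (p - 1)) * (x + y - (a + b)) ≤ 0 := by
    linear_combination htx + hty + hxy + p * (y - b) * hab
  linarith [nonpos_of_mul_nonpos_right hlin (by positivity)]

section Extremal

variable {s t p : ℝ}

noncomputable def extremalA (s t p : ℝ) : ℝ :=
  (s + t * (s / t) ^ (p / (p - 1))) ^ (-(1 / p))

noncomputable def extremalB (s t p : ℝ) : ℝ :=
  (s / t) ^ (1 / (p - 1)) * extremalA s t p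

lemma extremalA_pos (hs : 0 < s) (ht : 0 < t) : 0 < extremalA s t p := by
  unfold extremalA
  positivity

lemma extremalB_pos (hs : 0 < s) (ht : 0 < t) : 0 < extremalB s t p := by
  have := extremalA_pos (p := p) hs ht
  unfold extremalB
  positivity

lemma mul_extremalA_rpow_sub_one (hs : 0 ≤ s) (ht : 0 < t) (hp : 1 < p) :
    s * extremalA s t p ^ (p - 1) = t * extremalB s t p ^ (p - 1) := by
  rw [extremalB, Real.mul_rpow (by positivity) (by unfold extremalA; positivity),
    ← Real.rpow_mul (by positivity), one_div_mul_cancel (by linarith), Real.rpow_one,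
    ← mul_assoc, mul_div_cancel₀ _ ht.ne']

lemma mul_extremalA_rpow_add_mul_extremalB_rpow (hs : 0 < s) (ht : 0 < t) (hp : 1 < p) :
    s * extremalA s t p ^ p + t * extremalB s t p ^ p = 1 := by
  have hD : 0 < s + t * (s / t) ^ (p / (p - 1)) := by positivity
  rw [extremalB, Real.mul_rpow (by positivity) (extremalA_pos hs ht).le,
    ← Real.rpow_mul (by positivity), one_div_mul_eq_div, extremalA, ← Real.rpow_mul hD.le,
    neg_mul, one_div_mul_cancel (by linarith), Real.rpow_neg_one]
  field_simp

end Extremal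

theorem mu_complete_bipartite (s t : ℕ) (hs : 0 < s) (ht : 0 < t) (p : ℝ) (hp : 2 ≤ p) :
    mu (completeBipartiteGraph (Fin s) (Fin t)) p =
      (s : ℝ) * t *
        ((((s : ℝ) + t * ((s : ℝ) / t) ^ (p / (p - 1))) ^ (-(1 / p))) +
          ((s : ℝ) / t) ^ (1 / (p - 1)) *
            (((s : ℝ) + t * ((s : ℝ) / t) ^ (p / (p - 1))) ^ (-(1 / p)))) ^ 2 := by
  have hS : (0 : ℝ) < s := by exact_mod_cast hs
  have hT : (0 : ℝ) < t := by exact_mod_cast ht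
  have hp1 : 1 < p := by linarith
  have hp0 : 0 < p := by linarith
  have ha := extremalA_pos (p := p) hS hT
  have hb := extremalB_pos (p := p) hS hT
  have hnorm := mul_extremalA_rpow_add_mul_extremalB_rpow hS hT hp1
  change mu _ p = s * t * (extremalA s t p + extremalB s t p) ^ 2
  refine IsGreatest.csSup_eq ⟨⟨Sum.elim (fun _ => extremalA s t p) (fun _ => -extremalB s t p),
    ?_, ?_⟩, ?_⟩
  · simpa [pNorm_eq_one_iff hp0, abs_of_pos ha, abs_of_pos hb] using hnorm
  · simp only [quadForm_completeBipartiteGraph, Sum.elim_inl, Sum.elim_inr, sub_neg_eq_add,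
      sum_const, card_univ, Fintype.card_fin, nsmul_eq_mul]
    ring
  · rintro _ ⟨x, hx, rfl⟩
    have hsum := (pNorm_eq_one_iff hp0 x).1 hx
    rw [Fintype.sum_sum_type, ← card_mul_powerMean_rpow hp0.ne',
      ← card_mul_powerMean_rpow hp0.ne'] at hsum
    simp only [Fintype.card_fin] at hsum
    have hM₁ := powerMean_nonneg p (x ∘ Sum.inl)
    have hM₂ := powerMean_nonneg p (x ∘ Sum.inr)
    have hle := add_le_add_of_mul_rpow_add_mul_rpow_le hp1.le hS hT.le ha hb hM₁ hM₂
      (mul_extremalA_rpow_sub_one hS.le hT hp1) (hsum.trans hnorm.symm).le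
    calc quadForm _ x ≤ _ := quadForm_completeBipartiteGraph_le hp x
      _ ≤ _ := by simp only [Fintype.card_fin]; gcongr
end

section
/- For even n and p ≥ 2, the balanced complete bipartite graph K_{n/2,n/2} satisfies μ^{(p)}(K_{n/2,n/2}) = n^{2 − 2/p}. -/
open scoped Classical
open Finset

lemma sum_sum_sub_sq {V : Type*} [Fintype V] (x : V → ℝ) :
    ∑ i, ∑ j, (x i - x j) ^ 2
      = 2 * (Fintype.card V : ℝ) * ∑ i, x i ^ 2 - 2 * (∑ i, x i) ^ 2 := by
  have hrow : ∀ i : V, ∑ j, (x i - x j) ^ 2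
      = (Fintype.card V : ℝ) * x i ^ 2 + (∑ j, x j ^ 2) - (2 * x i) * ∑ j, x j := by
    intro i
    calc ∑ j, (x i - x j) ^ 2 = ∑ j, (x i ^ 2 + x j ^ 2 - (2 * x i) * x j) :=
          Finset.sum_congr rfl fun j _ => by ring
      _ = _ := by
          rw [Finset.sum_sub_distrib, Finset.sum_add_distrib, Finset.sum_const,
            Finset.card_univ, nsmul_eq_mul, ← Finset.mul_sum]
  calc ∑ i, ∑ j, (x i - x j) ^ 2
      = ∑ i, ((Fintype.card V : ℝ) * x i ^ 2 + (∑ j, x j ^ 2) - (2 * x i) * ∑ j, x j) :=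
        Finset.sum_congr rfl fun i _ => hrow i
    _ = _ := by
        rw [Finset.sum_sub_distrib, Finset.sum_add_distrib, ← Finset.mul_sum,
          Finset.sum_const, Finset.card_univ, nsmul_eq_mul]
        have h2 : ∑ i : V, (2 * x i) * (∑ j, x j) = 2 * (∑ i : V, x i) * (∑ j : V, x j) := by
          rw [← Finset.sum_mul, ← Finset.mul_sum]
        rw [h2]; ring

/-- Any graph's quadratic form is at most `n` times the sum of squares. -/
lemma quadForm_le_card_mul_sum_sq {V : Type*} [Fintype V] (G : SimpleGraph V) (x : V → ℝ) :
    quadForm G x ≤ (Fintype.card V : ℝ) * ∑ i, x i ^ 2 := by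
  have h1 : quadForm G x ≤ (∑ i, ∑ j, (x i - x j) ^ 2) / 2 := by
    unfold quadForm
    gcongr with i _ j _
    split_ifs
    · exact le_rfl
    · positivity
  refine h1.trans ?_
  rw [sum_sum_sub_sq]
  have := sq_nonneg (∑ i, x i)
  linarith

/-- Power-mean step: if `∑ |x i|^p = 1` and `p ≥ 2` then `∑ x i ^ 2 ≤ n^(1 - 2/p)`. -/
lemma sum_sq_le_of_sum_rpow_eq_one {V : Type*} [Fintype V] {p : ℝ} (hp : 2 ≤ p)
    (x : V → ℝ) (hs : ∑ i, |x i| ^ p = 1) :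
    ∑ i, x i ^ 2 ≤ (Fintype.card V : ℝ) ^ (1 - 2 / p) := by
  have hp0 : (0 : ℝ) < p := by linarith
  have hhalf : (1 : ℝ) ≤ p / 2 := by linarith
  have key := Real.inner_le_weight_mul_Lp_of_nonneg Finset.univ hhalf (fun _ : V => (1 : ℝ))
    (fun i => x i ^ 2) (fun _ => zero_le_one) (fun i => sq_nonneg _)
  simp only [one_mul] at key
  have hpow : ∀ i : V, ((x i ^ 2 : ℝ)) ^ (p / 2) = |x i| ^ p := by
    intro i
    rw [← sq_abs, ← Real.rpow_natCast |x i| 2, ← Real.rpow_mul (abs_nonneg _)]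
    congr 1
    push_cast; ring
  rw [Finset.sum_congr rfl fun i _ => hpow i, hs, Real.one_rpow, mul_one,
    Finset.sum_const, Finset.card_univ, nsmul_eq_mul, mul_one, inv_div] at key
  exact key

theorem mu_balanced_bipartite (n : ℕ) (hn : Even n) (p : ℝ) (hp : 2 ≤ p) :
    mu (completeBipartiteGraph (Fin (n / 2)) (Fin (n / 2))) p = (n : ℝ) ^ (2 - 2 / p) := by
  obtain ⟨m, rfl⟩ := hn
  have hm2 : (m + m) / 2 = m := by omega
  have hp0 : (0 : ℝ) < p := by linarith
  rw [hm2]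
  rcases Nat.eq_zero_or_pos m with hm | hm
  · subst hm
    have hset : {y | ∃ x : Fin 0 ⊕ Fin 0 → ℝ, pNorm p x = 1 ∧
        quadForm (completeBipartiteGraph (Fin 0) (Fin 0)) x = y} = (∅ : Set ℝ) := by
      ext y
      simp only [Set.mem_setOf_eq, Set.mem_empty_iff_false, iff_false, not_exists]
      intro x ⟨hx, _⟩
      rw [pNorm] at hx
      have h0 : (∑ i : Fin 0 ⊕ Fin 0, |x i| ^ p) = 0 := by simp
      rw [h0, Real.zero_rpow (by positivity : 1 / p ≠ 0)] at hx
      exact zero_ne_one hx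
    rw [mu, hset, Real.sSup_empty]
    rw [show ((0 + 0 : ℕ) : ℝ) = 0 by norm_num]
    rw [Real.zero_rpow]
    have : 2 / p ≤ 1 := by
      rw [div_le_one hp0]; linarith
    intro h; linarith [h]
  · -- positive case
    set V := Fin m ⊕ Fin m
    set G := completeBipartiteGraph (Fin m) (Fin m)
    have hcard : (Fintype.card V : ℝ) = ((m + m : ℕ) : ℝ) := by
      simp [V, Fintype.card_sum]
    have hN : (0 : ℝ) < ((m + m : ℕ) : ℝ) := by
      exact_mod_cast Nat.lt_of_lt_of_le hm (Nat.le_add_right m m)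
    set c : ℝ := ((m + m : ℕ) : ℝ) ^ (-(1 / p)) with hc_def
    have hc : 0 < c := Real.rpow_pos_of_pos hN _
    have hcp : c ^ p = ((m + m : ℕ) : ℝ)⁻¹ := by
      rw [hc_def, ← Real.rpow_mul hN.le]
      rw [show -(1 / p) * p = -1 by field_simp]
      rw [Real.rpow_neg_one]
    have hc2 : (c : ℝ) ^ (2 : ℕ) = ((m + m : ℕ) : ℝ) ^ (-(2 / p)) := by
      rw [hc_def, ← Real.rpow_natCast (((m + m : ℕ) : ℝ) ^ (-(1 / p))) 2,
        ← Real.rpow_mul hN.le]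
      congr 1
      push_cast; ring
    set x₀ : V → ℝ := Sum.elim (fun _ : Fin m => c) (fun _ : Fin m => -c) with hx₀
    have hnorm : pNorm p x₀ = 1 := by
      rw [pNorm]
      have hsum : ∑ i : V, |x₀ i| ^ p = 1 := by
        rw [Fintype.sum_sum_type]
        simp only [hx₀, Sum.elim_inl, Sum.elim_inr, abs_neg, abs_of_pos hc]
        simp only [Finset.sum_const, Finset.card_univ, Fintype.card_fin, nsmul_eq_mul, hcp]
        rw [← add_mul, mul_inv_eq_one₀ hN.ne']
        push_cast
        ring
      rw [hsum, Real.one_rpow]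
    have hquad : quadForm G x₀ = ((m + m : ℕ) : ℝ) ^ (2 - 2 / p) := by
      rw [quadForm]
      have hval : ∑ i : V, ∑ j : V, (if G.Adj i j then (x₀ i - x₀ j) ^ 2 else 0)
          = 2 * (m : ℝ) * m * (2 * c) ^ 2 := by
        rw [Fintype.sum_sum_type]
        have hin : ∀ i : V, ∑ j : V, (if G.Adj i j then (x₀ i - x₀ j) ^ 2 else 0)
            = ∑ a : Fin m, (if G.Adj i (Sum.inl a) then (x₀ i - c) ^ 2 else 0)
              + ∑ b : Fin m, (if G.Adj i (Sum.inr b) then (x₀ i + c) ^ 2 else 0) := by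
          intro i
          rw [Fintype.sum_sum_type]
          simp [hx₀, sub_neg_eq_add]
        simp only [hin]
        simp [G, hx₀, Finset.sum_const, Finset.card_univ, Fintype.card_fin]
        ring
      rw [hval]
      have h4 : 2 * (m : ℝ) * m * (2 * c) ^ 2 / 2 = ((m + m : ℕ) : ℝ) ^ (2 : ℕ) * c ^ (2 : ℕ) := by
        push_cast; ring
      rw [h4, hc2, ← Real.rpow_natCast ((m + m : ℕ) : ℝ) 2, ← Real.rpow_add hN]
      congr 1
    apply IsGreatest.csSup_eq
    constructor
    · exact ⟨x₀, hnorm, hquad⟩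
    · rintro y ⟨x, hx, rfl⟩
      have h0 : (0 : ℝ) ≤ ∑ i : V, |x i| ^ p :=
        Finset.sum_nonneg fun i _ => Real.rpow_nonneg (abs_nonneg _) p
      have hs : ∑ i : V, |x i| ^ p = 1 := by
        have := congrArg (· ^ p) hx
        simp only [Real.one_rpow] at this
        rwa [pNorm, ← Real.rpow_mul h0, one_div, inv_mul_cancel₀ hp0.ne', Real.rpow_one] at this
      calc quadForm G x ≤ (Fintype.card V : ℝ) * ∑ i, x i ^ 2 :=
            quadForm_le_card_mul_sum_sq G x
        _ ≤ (Fintype.card V : ℝ) * (Fintype.card V : ℝ) ^ (1 - 2 / p) := by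
            have := sum_sq_le_of_sum_rpow_eq_one hp x hs
            gcongr
        _ = ((m + m : ℕ) : ℝ) ^ (2 - 2 / p) := by
            have hne : 1 + (1 - 2 / p) ≠ 0 := by
              have h1 : 2 / p ≤ 1 := by rw [div_le_one hp0]; linarith
              intro h; linarith
            rw [hcard, ← Real.rpow_one_add' hN.le hne]
            congr 1; ring
end
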